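/- For every natural number $t \ge 0$ and every real number $x$, the following identity holds: $\sum_{i=0}^{t-1} 16^{t-i-1}\sum_{j=1}^{2^i} C_2\!\left(2^i x + j - 1\right) = 2^{4t}\left(\frac{x^2}{16} - \frac{x}{48} + \frac{1}{336}\right) - 2^{3t}\left(\frac{x^2}{16} + \frac{x}{16} + \frac{1}{48}\right) + 2^{2t}\left(\frac{x}{12} + \frac{1}{24}\right) - 2^{t}\,\frac{1}{42}$. -/

import Mathlib

/-!
By the hockey-stick identity the inner sum is `C₃(2ⁱx + 2ⁱ) - C₃(2ⁱx)` with
`C₃(y) = y(y-1)(y-2)/6`. The outer sum `S t` is then the solution of `S 0 = 0`,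
`S (t+1) = 16 S t + C₃(2ᵗx + 2ᵗ) - C₃(2ᵗx)`, and the right-hand side, a polynomial in `u = 2ᵗ`,
satisfies the same recurrence: replacing `u` by `2u` is a polynomial identity in `u` and `x`.
-/

noncomputable def C2 (y : ℝ) : ℝ := y * (y - 1) / 2

noncomputable def C3 (y : ℝ) : ℝ := y * (y - 1) * (y - 2) / 6

lemma C3_add_one_sub (y : ℝ) : C3 (y + 1) - C3 y = C2 y := by
  unfold C3 C2
  ring

lemma sum_Icc_C2 (a : ℝ) (n : ℕ) :
    ∑ j ∈ Finset.Icc (1 : ℕ) n, C2 (a + (j : ℝ) - 1) = C3 (a + n) - C3 a := by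
  induction n with
  | zero => simp
  | succ n ih =>
    rw [Finset.sum_Icc_succ_top (by omega), ih, ← C3_add_one_sub]
    push_cast
    ring_nf

lemma sum_range_pow_mul_eq_of_recurrence {R : Type*} [CommSemiring R] (r : R) (f F : ℕ → R)
    (h0 : F 0 = 0) (hsucc : ∀ t, F (t + 1) = r * F t + f t) (t : ℕ) :
    ∑ i ∈ Finset.range t, r ^ (t - i - 1) * f i = F t := by
  induction t with
  | zero => simp [h0]
  | succ t ih =>
    rw [Finset.sum_range_succ, hsucc, ← ih, Finset.mul_sum, Nat.add_sub_cancel_left, Nat.sub_self,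
      pow_zero, one_mul]
    congr 1
    refine Finset.sum_congr rfl fun i hi => ?_
    rw [Finset.mem_range] at hi
    rw [show t + 1 - i - 1 = t - i - 1 + 1 by omega, pow_succ']
    ring

noncomputable def closedFormB01 (x u : ℝ) : ℝ :=
  u ^ 4 * (x ^ 2 / 16 - x / 48 + 1 / 336) - u ^ 3 * (x ^ 2 / 16 + x / 16 + 1 / 48)
    + u ^ 2 * (x / 12 + 1 / 24) - u * (1 / 42)

lemma closedFormB01_two_mul (x u : ℝ) :
    closedFormB01 x (2 * u) = 16 * closedFormB01 x u + (C3 (u * x + u) - C3 (u * x)) := by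
  unfold closedFormB01 C3
  ring

/-- Closed form for `B₍₀,₁₎(x)`:
`∑_{i=0}^{t-1} 16^{t-i-1} ∑_{j=1}^{2^i} C₂(2^i x + j - 1)
  = 2^{4t} (x²/16 - x/48 + 1/336) - 2^{3t} (x²/16 + x/16 + 1/48)
    + 2^{2t} (x/12 + 1/24) - 2^t / 42`. -/
theorem closed_form_B01 (t : ℕ) (x : ℝ) :
    ∑ i ∈ Finset.range t, (16 : ℝ) ^ (t - i - 1) *
        ∑ j ∈ Finset.Icc (1 : ℕ) (2 ^ i), C2 ((2 : ℝ) ^ i * x + (j : ℝ) - 1)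
      = 2 ^ (4 * t) * (x ^ 2 / 16 - x / 48 + 1 / 336)
        - 2 ^ (3 * t) * (x ^ 2 / 16 + x / 16 + 1 / 48)
        + 2 ^ (2 * t) * (x / 12 + 1 / 24) - 2 ^ t * (1 / 42) := by
  have hrhs : 2 ^ (4 * t) * (x ^ 2 / 16 - x / 48 + 1 / 336)
        - 2 ^ (3 * t) * (x ^ 2 / 16 + x / 16 + 1 / 48)
        + 2 ^ (2 * t) * (x / 12 + 1 / 24) - 2 ^ t * (1 / 42) = closedFormB01 x (2 ^ t) := by
    simp only [closedFormB01, pow_mul']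
  rw [hrhs]
  refine sum_range_pow_mul_eq_of_recurrence _ _ (fun t => closedFormB01 x (2 ^ t)) ?_ ?_ t
  · unfold closedFormB01
    ring
  · intro s
    rw [pow_succ', closedFormB01_two_mul, sum_Icc_C2, Nat.cast_pow, Nat.cast_ofNat]
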